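/- arXiv:1506.02680 — 2 statements merged into one kernel-verified Lean document; each statement's English description precedes it below -/
import Mathlib

section
/- Let n ≥ 3 and let λ_1,…,λ_n be reals with λ_1 ≥ ⋯ ≥ λ_{n−1} > 0 > λ_n, each λ_i ∉ ℤ_{≥0}, and λ := λ_1+⋯+λ_n < 0. With d defined as below: for 0 ≤ k ≤ ⌈λ_{n−1}⌉ one has d(k) = C(k+n−2, n−2), and for every k > ⌈λ_{n−1}⌉ one has |d(k)| < C(k+n−2, n−2). Equivalently, the definite multiplicity spaces in M_{λ_1} ⊗ ⋯ ⊗ M_{λ_n} are exactly the positive definite spaces of levels 0 through ⌈λ_{n−1}⌉. -/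
open scoped Classical

/-- `fsig λ k` is the coefficient of `e^{λ-2k}` in the signature character of the
Verma module `M_λ` evaluated at `s = -1`. -/
noncomputable def fsig (lam : ℝ) (k : ℤ) : ℤ :=
  if k < 0 then 0
  else if lam < 0 then (-1) ^ k.toNat
  else if k ≤ ⌊lam⌋ then 1
  else (-1) ^ (k + ⌈lam⌉).toNat

/-- `convSig n lam k = Σ_{k₁+⋯+k_n = k} ∏_i f_{λ_i}(k_i)`, the coefficient of
`e^{λ−2k}` in the product of signature characters at `s = −1`. -/
noncomputable def convSig (n : ℕ) (lam : Fin n → ℝ) (k : ℕ) : ℤ :=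
  ∑ x ∈ Finset.Nat.antidiagonalTuple n k, ∏ i, fsig (lam i) (x i)

/-! Since `λ_n < 0` and `λ - 2m < 0` for every `m`, every character of negative weight has
coefficients `(-1)^k`. The recursion for `d` is therefore the deconvolution of `conv` by
`k ↦ (-1)^k`, and peeling the factor of `λ_n` off `conv` shows that `d` is the signature
convolution of the positive weights `λ_1, …, λ_{n-1}` alone. Since `f_μ = 1` on `0, …, ⌈μ⌉`,
up to level `⌈λ_{n-1}⌉` each of the `C(k+n-2, n-2)` terms of that sum is `1`. Above it, the
tuples `k e_{n-1}` and `(k-1) e_{n-1} + e_j` contribute opposite signs, so the sum of `±1`'s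
falls short of the number of terms. -/

open Finset

lemma card_antidiagonalTuple (m k : ℕ) :
    #(Nat.antidiagonalTuple (m + 1) k) = (k + m).choose m := by
  rw [← piAntidiag_univ_fin_eq_antidiagonalTuple, ← map_sym_eq_piAntidiag, card_map, sym_univ,
    card_univ, Sym.card_sym_fin_eq_multichoose, Nat.multichoose_eq,
    show m + 1 + k - 1 = k + m by omega, Nat.choose_symm_add]

lemma sum_antidiagonalTuple_succ {R : Type*} [CommSemiring R] (m k : ℕ)
    (F : Fin (m + 1) → ℕ → R) :
    ∑ x ∈ Nat.antidiagonalTuple (m + 1) k, ∏ i, F i (x i) =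
      ∑ p ∈ antidiagonal k, F (Fin.last m) p.1 *
        ∑ y ∈ Nat.antidiagonalTuple m p.2, ∏ i, F i.castSucc (y i) := by
  simp_rw [mul_sum]
  rw [sum_sigma']
  symm
  refine sum_nbij' (fun q => Fin.snoc q.2 q.1.1)
    (fun x => ⟨(x (Fin.last m), ∑ i, Fin.init x i), Fin.init x⟩) ?_ ?_ ?_ ?_ ?_
  · rintro ⟨⟨a, b⟩, y⟩ hq
    simp only [mem_sigma, HasAntidiagonal.mem_antidiagonal, Nat.mem_antidiagonalTuple] at hq ⊢
    rw [Fin.sum_univ_castSucc]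
    simp [hq.2, ← hq.1, add_comm]
  · intro x hx
    simp only [mem_sigma, HasAntidiagonal.mem_antidiagonal, Nat.mem_antidiagonalTuple] at hx ⊢
    rw [Fin.sum_univ_castSucc] at hx
    simp [Fin.init, ← hx, add_comm]
  · rintro ⟨⟨a, b⟩, y⟩ hq
    simp only [mem_sigma, HasAntidiagonal.mem_antidiagonal, Nat.mem_antidiagonalTuple] at hq
    simp [hq.2]
  · intro x _
    exact Fin.snoc_init_self x
  · rintro ⟨⟨a, b⟩, y⟩ _
    simp [Fin.prod_univ_castSucc, mul_comm]

lemma abs_sum_lt_card_of_add_eq_zero {ι R : Type*} [DecidableEq ι] [Ring R] [LinearOrder R]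
    [IsStrictOrderedRing R] {s : Finset ι} {f : ι → R} (hf : ∀ x ∈ s, |f x| ≤ 1) {a b : ι}
    (ha : a ∈ s) (hb : b ∈ s) (hab : a ≠ b) (hcancel : f a + f b = 0) :
    |∑ x ∈ s, f x| < #s := by
  have hb' : b ∈ s.erase a := mem_erase.2 ⟨hab.symm, hb⟩
  rw [← add_sum_erase s f ha, ← add_sum_erase _ f hb', ← add_assoc, hcancel, zero_add]
  calc |∑ x ∈ (s.erase a).erase b, f x|
      ≤ ∑ x ∈ (s.erase a).erase b, |f x| := abs_sum_le_sum_abs f _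
    _ ≤ #((s.erase a).erase b) := by
        simpa using sum_le_sum fun x hx => hf x (mem_of_mem_erase (mem_of_mem_erase hx))
    _ < #s := mod_cast (card_erase_lt_of_mem hb').trans (card_erase_lt_of_mem ha)

theorem eq_of_forall_sum_range_succ_mul_eq {R : Type*} [Semiring R] [IsLeftCancelAdd R]
    {g d e : ℕ → R} (hg : g 0 = 1)
    (h : ∀ k, ∑ m ∈ range (k + 1), d m * g (k - m) = ∑ m ∈ range (k + 1), e m * g (k - m)) :
    d = e := by
  funext k
  induction k using Nat.strong_induction_on with
  | _ k ih =>
    have hk := h k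
    rw [sum_range_succ, sum_range_succ, Nat.sub_self, hg, mul_one, mul_one,
      sum_congr rfl fun m hm => by rw [ih m (mem_range.1 hm)]] at hk
    exact add_left_cancel hk

lemma fsig_natCast_of_neg {lam : ℝ} (h : lam < 0) (k : ℕ) : fsig lam k = (-1) ^ k := by
  simp [fsig, h]

lemma fsig_eq_one_of_le_ceil {lam : ℝ} {k : ℤ} (hk₀ : 0 ≤ k) (hk : k ≤ ⌈lam⌉) :
    fsig lam k = 1 := by
  have hceil := Int.ceil_le_floor_add_one lam
  unfold fsig
  split_ifs with _ hneg
  · omega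
  · obtain rfl : k = 0 := by have : ⌈lam⌉ ≤ 0 := Int.ceil_le.2 (by simpa using hneg.le); omega
    rfl
  · rfl
  · rw [show (k + ⌈lam⌉).toNat = 2 * k.toNat by omega, pow_mul]
    norm_num

lemma fsig_add_one_of_ceil_le {lam : ℝ} (hlam : 0 ≤ lam) {k : ℤ} (hk : ⌈lam⌉ ≤ k) :
    fsig lam (k + 1) = -fsig lam k := by
  have hceil : 0 ≤ ⌈lam⌉ := Int.ceil_nonneg hlam
  have hfloor := Int.floor_le_ceil lam
  have hk₁ : ¬k + 1 < 0 := by omega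
  have hk₀ : ¬k < 0 := by omega
  have hk₁' : ¬k + 1 ≤ ⌊lam⌋ := by omega
  simp only [fsig, hk₁, hk₀, hk₁', hlam.not_gt, if_false,
    show (k + 1 + ⌈lam⌉).toNat = (k + ⌈lam⌉).toNat + 1 by omega, pow_succ]
  split_ifs with hk'
  · rw [show (k + ⌈lam⌉).toNat = 2 * k.toNat by omega, pow_mul]
    norm_num
  · ring

lemma abs_fsig_le_one (lam : ℝ) (k : ℤ) : |fsig lam k| ≤ 1 := by
  unfold fsig
  split_ifs <;> simp

lemma convSig_succ_of_neg_last {m : ℕ} {lam : Fin (m + 1) → ℝ} (hlast : lam (Fin.last m) < 0)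
    (k : ℕ) :
    convSig (m + 1) lam k =
      ∑ j ∈ range (k + 1), convSig m (fun i => lam i.castSucc) j * (-1) ^ (k - j) := by
  simp only [convSig]
  rw [sum_antidiagonalTuple_succ m k fun i j => fsig (lam i) j, ← Nat.sum_antidiagonal_swap]
  simp only [Prod.fst_swap, Prod.snd_swap]
  rw [Nat.sum_antidiagonal_eq_sum_range_succ fun a b => fsig (lam (Fin.last m)) (b : ℕ) *
    ∑ y ∈ Nat.antidiagonalTuple m a, ∏ i, fsig (lam i.castSucc) (y i)]
  refine sum_congr rfl fun j _ => ?_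
  rw [fsig_natCast_of_neg hlast, mul_comm]

lemma convSig_eq_choose_of_le_ceil {m k : ℕ} {mu : Fin (m + 1) → ℝ}
    (hk : ∀ i, (k : ℤ) ≤ ⌈mu i⌉) : convSig (m + 1) mu k = (k + m).choose m := by
  have hprod : ∀ y ∈ Nat.antidiagonalTuple (m + 1) k, ∏ i, fsig (mu i) (y i) = 1 := by
    intro y hy
    refine prod_eq_one fun i _ => fsig_eq_one_of_le_ceil (by positivity) (le_trans ?_ (hk i))
    rw [Nat.mem_antidiagonalTuple] at hy
    exact_mod_cast hy ▸ single_le_sum (fun _ _ => Nat.zero_le _) (mem_univ i)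
  rw [convSig, sum_congr rfl hprod, sum_const, card_antidiagonalTuple, nsmul_one]

lemma abs_convSig_lt_choose {m k : ℕ} {mu : Fin (m + 2) → ℝ} (hpos : ∀ i, 0 < mu i)
    {j : Fin (m + 2)} (hk : ⌈mu j⌉ < k) :
    |convSig (m + 2) mu k| < (k + (m + 1)).choose (m + 1) := by
  obtain ⟨j', hj'⟩ := exists_ne j
  obtain ⟨k, rfl⟩ : ∃ k', k = k' + 1 := ⟨k - 1, by have := Int.ceil_nonneg (hpos j).le; omega⟩
  have hfsig_zero : ∀ i, fsig (mu i) 0 = 1 := fun i =>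
    fsig_eq_one_of_le_ceil le_rfl (Int.ceil_nonneg (hpos i).le)
  set T₁ : Fin (m + 2) → ℕ := Pi.single j (k + 1)
  set T₂ : Fin (m + 2) → ℕ := Pi.single j k + Pi.single j' 1
  have hT₁ : T₁ ∈ Nat.antidiagonalTuple (m + 2) (k + 1) := by
    simp [T₁, Nat.mem_antidiagonalTuple]
  have hT₂ : T₂ ∈ Nat.antidiagonalTuple (m + 2) (k + 1) := by
    simp [T₂, Nat.mem_antidiagonalTuple, sum_add_distrib]
  have hT₁₂ : T₁ ≠ T₂ := fun h => by simpa [T₁, T₂, hj'.symm] using congrFun h j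
  have hprod₁ : ∏ i, fsig (mu i) (T₁ i) = fsig (mu j) (k + 1) := by
    rw [Fintype.prod_eq_single j fun i hi => by simp [T₁, hi, hfsig_zero]]
    simp [T₁]
  have hprod₂ : ∏ i, fsig (mu i) (T₂ i) = fsig (mu j) k := by
    rw [Fintype.prod_eq_mul j j' hj'.symm fun i hi => by simp [T₂, hi.1, hi.2, hfsig_zero]]
    simp [T₂, hj', hj'.symm, fsig_eq_one_of_le_ceil zero_le_one (Int.ceil_pos.2 (hpos j'))]
  have habs : ∀ y ∈ Nat.antidiagonalTuple (m + 2) (k + 1), |∏ i, fsig (mu i) (y i)| ≤ 1 :=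
    fun y _ => by
      simpa [abs_prod] using prod_le_one (fun i _ => abs_nonneg _) fun i _ => abs_fsig_le_one _ _
  have hcancel : ∏ i, fsig (mu i) (T₁ i) + ∏ i, fsig (mu i) (T₂ i) = 0 := by
    rw [hprod₁, hprod₂, fsig_add_one_of_ceil_le (hpos j).le (by omega), neg_add_cancel]
  rw [← card_antidiagonalTuple]
  exact_mod_cast abs_sum_lt_card_of_add_eq_zero habs hT₁ hT₂ hT₁₂ hcancel

/-- Case 5(a) of Theorem 1.1: exactly one negative highest weight and
total weight `λ < 0`. The definite multiplicity spaces are exactly the positive definite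
spaces of levels `0` through `⌈λ_{n−1}⌉`. -/
theorem stmt_17 (n : ℕ) (hn : 3 ≤ n) (lam : Fin n → ℝ) (hanti : Antitone lam)
    (hpos : ∀ i : Fin n, (i : ℕ) < n - 1 → 0 < lam i)
    (hneg : lam ⟨n - 1, by omega⟩ < 0)
    (hsum : (∑ i, lam i) < 0)
    (d : ℕ → ℤ)
    (hd : ∀ k : ℕ, d k = convSig n lam k -
      ∑ m ∈ Finset.range k, d m * fsig ((∑ i, lam i) - 2 * m) ((k : ℤ) - m)) :
    ∀ k : ℕ,
      ((k : ℤ) ≤ ⌈lam ⟨n - 2, by omega⟩⌉ → d k = ((k + n - 2).choose (n - 2) : ℤ)) ∧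
      (⌈lam ⟨n - 2, by omega⟩⌉ < (k : ℤ) → |d k| < ((k + n - 2).choose (n - 2) : ℤ)) := by
  obtain ⟨p, rfl⟩ : ∃ p, n = p + 3 := ⟨n - 3, by omega⟩
  have hd_eq : d = convSig (p + 2) fun i => lam i.castSucc := by
    refine eq_of_forall_sum_range_succ_mul_eq (g := ((-1 : ℤ) ^ ·)) (pow_zero _) fun k => ?_
    have hsign : ∀ m ∈ range k, fsig (∑ i, lam i - 2 * m) ((k : ℤ) - m) = (-1) ^ (k - m) := by
      intro m hm
      rw [← Nat.cast_sub (mem_range.1 hm).le]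
      exact fsig_natCast_of_neg (by linarith [m.cast_nonneg (α := ℝ)]) _
    rw [← convSig_succ_of_neg_last (m := p + 2) hneg, sum_range_succ, hd k,
      sum_congr rfl fun m hm => congrArg (d m * ·) (hsign m hm), Nat.sub_self, pow_zero,
      mul_one, add_sub_cancel]
  have hpos' : ∀ i : Fin (p + 2), 0 < lam i.castSucc := fun i => hpos _ (by simp)
  intro k
  rw [hd_eq]
  exact ⟨fun hk => convSig_eq_choose_of_le_ceil fun i =>
      hk.trans (Int.ceil_le_ceil (hanti (Fin.castSucc_le_castSucc_iff.2 (Fin.le_last i)))),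
    fun hk => abs_convSig_lt_choose hpos' (j := Fin.last (p + 1)) hk⟩
end

section
/- Let n ≥ 2 and let λ_1,…,λ_n be reals with each λ_i ∉ ℤ_{≥0} and λ := λ_1+⋯+λ_n ∉ ℤ_{≥0}. With d defined as below for the generic tuple (λ_1,…,λ_n): lim_{m → ∞} |d(m)| / C(m+n−2, n−2) = 1. That is, the ratio of the absolute signature of the level-m multiplicity space to its dimension tends to 1 as m → ∞. -/
open scoped Classical
open Filter

/-! Write `F_μ = ∑ₖ f_μ(k) Xᵏ`. For generic `μ` the sequence `f_μ` is eventually alternating, so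
`(1 + X) F_μ` is a polynomial `G_μ` with `G_μ(-1) = ±1`. Past `⌈λ⌉` every `f_{λ-2m}` in the
recursion is in its alternating tail, and the recursion collapses to
`d(k) = [Xᵏ] (1 + X) ∏ F_{λ_i} = [Xᵏ] ∏ G_{λ_i} · (1 + X)^{-(n-1)}`. The coefficients of
`(1 + X)^{-(n-1)}` are `(-1)ᵏ C(k+n-2, n-2)`; as `∏ G_{λ_i}` is a fixed polynomial and
`C(k-a+n-2, n-2) / C(k+n-2, n-2) → 1` for each fixed `a`, this gives
`(-1)ᵏ d(k) / C(k+n-2, n-2) → (∏ G_{λ_i})(-1) = ±1`. -/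

namespace PowerSeries

variable (R : Type*) [CommRing R]

noncomputable def invOneAddPow (d : ℕ) : R⟦X⟧ := rescale (-1) (invOneSubPow R d : R⟦X⟧)

theorem one_add_X_pow_mul_invOneAddPow (d : ℕ) : (1 + X : R⟦X⟧) ^ d * invOneAddPow R d = 1 := by
  have h : rescale (-1 : R) ((1 - X) ^ d * (invOneSubPow R d : R⟦X⟧)) = 1 := by
    rw [← invOneSubPow_inv_eq_one_sub_pow, (invOneSubPow R d).inv_val, map_one]
  simpa [invOneAddPow, rescale_neg_one_X] using h

theorem coeff_invOneAddPow_succ (d k : ℕ) :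
    coeff k (invOneAddPow R (d + 1)) = (-1) ^ k * (d + k).choose d := by
  simp [invOneAddPow, coeff_rescale, invOneSubPow_val_succ_eq_mk_add_choose]

end PowerSeries

open PowerSeries Finset

theorem fsig_zero (μ : ℝ) : fsig μ 0 = 1 := by
  by_cases hμ : μ < 0
  · simp [fsig, hμ]
  · simp [fsig, hμ, Int.floor_nonneg.mpr (not_lt.mp hμ)]

theorem fsig_natCast {μ : ℝ} (hμ : ∀ z : ℕ, μ ≠ z) (k : ℕ) :
    fsig μ k = if k < ⌈μ⌉₊ then 1 else (-1) ^ (k - ⌈μ⌉₊) := by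
  rcases (hμ 0).lt_or_gt with hneg | hpos
  · have hN : ⌈μ⌉₊ = 0 := Nat.ceil_eq_zero.mpr (by simpa using hneg.le)
    simp [fsig, hN, show μ < 0 by simpa using hneg]
  · have hlt : k < ⌈μ⌉₊ ↔ (k : ℤ) ≤ ⌊μ⌋ := by
      rw [Nat.lt_ceil, Int.le_floor, Int.cast_natCast]
      exact ⟨le_of_lt, fun h => h.lt_of_ne (hμ k).symm⟩
    have hceil : ⌈μ⌉ = ⌈μ⌉₊ := (Int.natCast_ceil_eq_ceil (by simpa using hpos.le)).symm
    simp only [fsig, Nat.cast_nonneg, not_lt.mpr, if_false, show ¬ μ < 0 by simpa using hpos.le,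
      hlt, hceil]
    split_ifs with h
    · rfl
    · obtain ⟨j, rfl⟩ := Nat.exists_eq_add_of_le (not_lt.mp (hlt.not.mpr h))
      rw [show ((⌈μ⌉₊ + j : ℕ) : ℤ) + ⌈μ⌉₊ = ((j + 2 * ⌈μ⌉₊ : ℕ) : ℤ) by push_cast; ring,
        Int.toNat_natCast, Nat.add_sub_cancel_left, pow_add, pow_mul]
      simp

noncomputable def sigSeries (μ : ℝ) : ℤ⟦X⟧ := mk fun k => fsig μ k

noncomputable def sigNumerator (μ : ℝ) : Polynomial ℤ :=
  (1 + Polynomial.X) * ∑ k ∈ range ⌈μ⌉₊, Polynomial.X ^ k + Polynomial.X ^ ⌈μ⌉₊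

theorem sigSeries_eq_add_X_pow_mul_invOneAddPow {μ : ℝ} (hμ : ∀ z : ℕ, μ ≠ z) :
    sigSeries μ = ((∑ k ∈ range ⌈μ⌉₊, Polynomial.X ^ k : Polynomial ℤ) : ℤ⟦X⟧) +
      X ^ ⌈μ⌉₊ * invOneAddPow ℤ 1 := by
  ext k
  simp only [sigSeries, coeff_mk, fsig_natCast hμ, map_add, Polynomial.coeff_coe,
    Polynomial.finsetSum_coeff, Polynomial.coeff_X_pow, sum_ite_eq, mem_range, coeff_X_pow_mul',
    coeff_invOneAddPow_succ]
  split_ifs <;> first | omega | simp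

theorem coe_sigNumerator {μ : ℝ} (hμ : ∀ z : ℕ, μ ≠ z) :
    (sigNumerator μ : ℤ⟦X⟧) = (1 + X) * sigSeries μ := by
  have h := one_add_X_pow_mul_invOneAddPow ℤ 1
  rw [sigSeries_eq_add_X_pow_mul_invOneAddPow hμ]
  push_cast [sigNumerator]
  linear_combination -X ^ ⌈μ⌉₊ * h

theorem eval_neg_one_sigNumerator (μ : ℝ) : (sigNumerator μ).eval (-1) = (-1) ^ ⌈μ⌉₊ := by
  simp [sigNumerator]

theorem fsig_add_fsig_sub_one {μ : ℝ} (hμ : ∀ z : ℕ, μ ≠ z) {j : ℤ} (hj : ⌈μ⌉₊ < j) :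
    fsig μ j + fsig μ (j - 1) = 0 := by
  lift j to ℕ using by omega
  obtain ⟨i, rfl⟩ : ∃ i, j = ⌈μ⌉₊ + i + 1 := ⟨j - ⌈μ⌉₊ - 1, by omega⟩
  rw [show ((⌈μ⌉₊ + i + 1 : ℕ) : ℤ) - 1 = ((⌈μ⌉₊ + i : ℕ) : ℤ) by push_cast; ring,
    fsig_natCast hμ, fsig_natCast hμ, if_neg (by omega), if_neg (by omega),
    Nat.add_sub_cancel_left, Nat.add_assoc, Nat.add_sub_cancel_left, pow_succ]
  ring

theorem convSig_eq_coeff_prod (n : ℕ) (lam : Fin n → ℝ) (k : ℕ) :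
    convSig n lam k = coeff k (∏ i, sigSeries (lam i)) := by
  rw [coeff_prod, convSig]
  refine sum_nbij' (fun x => Finsupp.equivFunOnFinite.symm x) (fun l => ⇑l) ?_ ?_ ?_ ?_ ?_
  · intro x hx
    simpa using Nat.mem_antidiagonalTuple.mp hx
  · intro l hl
    simpa [Nat.mem_antidiagonalTuple] using (mem_finsuppAntidiag.mp hl).1
  · intro x _; rfl
  · intro l _; simp
  · intro x _
    simp [sigSeries]

theorem one_add_X_mul_prod_sigSeries {ι : Type*} [Fintype ι] [Nonempty ι] {lam : ι → ℝ}
    (hgen : ∀ (i : ι) (z : ℕ), lam i ≠ z) :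
    (1 + X) * ∏ i, sigSeries (lam i) =
      ((∏ i, sigNumerator (lam i) : Polynomial ℤ) : ℤ⟦X⟧) *
        invOneAddPow ℤ (Fintype.card ι - 1) := by
  have hcard : Fintype.card ι = Fintype.card ι - 1 + 1 :=
    (Nat.sub_add_cancel Fintype.card_pos).symm
  have h := one_add_X_pow_mul_invOneAddPow ℤ (Fintype.card ι - 1)
  rw [← Polynomial.coeToPowerSeries.ringHom_apply, map_prod]
  simp_rw [Polynomial.coeToPowerSeries.ringHom_apply, coe_sigNumerator (hgen _), prod_mul_distrib,
    prod_const, card_univ]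
  rw [hcard, pow_succ, Nat.add_sub_cancel]
  linear_combination (-(1 + X) * ∏ i, sigSeries (lam i)) * h

theorem natCeil_sub_two_mul_lt {μ : ℝ} {m j : ℕ} (hμ : ⌈μ⌉₊ < j) (hm : m < j) :
    (⌈μ - 2 * m⌉₊ : ℤ) < j - m := by
  have : ⌈μ - 2 * m⌉₊ ≤ j - m - 1 := by
    rw [Nat.ceil_le, Nat.cast_sub (by omega), Nat.cast_sub hm.le]
    have h1 : μ ≤ ⌈μ⌉₊ := Nat.le_ceil μ
    have h2 : (⌈μ⌉₊ : ℝ) + 1 ≤ j := by exact_mod_cast hμ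
    push_cast
    linarith
  omega

section Recursion

variable {n : ℕ} {lam : Fin n → ℝ} {d : ℕ → ℤ}

theorem convSig_eq_sum_range
    (hd : ∀ k : ℕ, d k = convSig n lam k -
      ∑ m ∈ range k, d m * fsig ((∑ i, lam i) - 2 * m) ((k : ℤ) - m)) (k : ℕ) :
    convSig n lam k = ∑ m ∈ range (k + 1), d m * fsig ((∑ i, lam i) - 2 * m) ((k : ℤ) - m) := by
  rw [sum_range_succ, sub_self, fsig_zero, hd k]
  ring

theorem eq_convSig_add_convSig_sub_one (hsum : ∀ z : ℕ, (∑ i, lam i) ≠ z)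
    (hd : ∀ k : ℕ, d k = convSig n lam k -
      ∑ m ∈ range k, d m * fsig ((∑ i, lam i) - 2 * m) ((k : ℤ) - m))
    {k : ℕ} (hk : ⌈∑ i, lam i⌉₊ < k) :
    d k = convSig n lam k + convSig n lam (k - 1) := by
  obtain ⟨j, rfl⟩ : ∃ j, k = j + 1 := ⟨k - 1, by omega⟩
  have htail : ∀ m ∈ range (j + 1), d m * fsig ((∑ i, lam i) - 2 * m) (((j + 1 : ℕ) : ℤ) - m)
      + d m * fsig ((∑ i, lam i) - 2 * m) ((j : ℤ) - m) = 0 := by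
    intro m hm
    have hgen : ∀ z : ℕ, (∑ i, lam i) - 2 * m ≠ z := fun z h =>
      hsum (z + 2 * m) (by push_cast; linarith)
    rw [← mul_add, show (j : ℤ) - m = ((j + 1 : ℕ) : ℤ) - m - 1 by push_cast; ring,
      fsig_add_fsig_sub_one hgen (natCeil_sub_two_mul_lt hk (by simpa [Nat.lt_succ_iff] using hm)),
      mul_zero]
  rw [convSig_eq_sum_range hd, convSig_eq_sum_range hd, Nat.add_sub_cancel,
    sum_range_succ _ (j + 1),
    add_right_comm, ← sum_add_distrib, sum_eq_zero htail, sub_self, fsig_zero]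
  ring

theorem eq_coeff_mul_invOneAddPow [NeZero n] (hgen : ∀ (i : Fin n) (z : ℕ), lam i ≠ z)
    (hsum : ∀ z : ℕ, (∑ i, lam i) ≠ z)
    (hd : ∀ k : ℕ, d k = convSig n lam k -
      ∑ m ∈ range k, d m * fsig ((∑ i, lam i) - 2 * m) ((k : ℤ) - m))
    {k : ℕ} (hk : ⌈∑ i, lam i⌉₊ < k) :
    d k = coeff k
      (((∏ i, sigNumerator (lam i) : Polynomial ℤ) : ℤ⟦X⟧) * invOneAddPow ℤ (n - 1)) := by
  have h := one_add_X_mul_prod_sigSeries hgen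
  rw [Fintype.card_fin] at h
  obtain ⟨j, rfl⟩ : ∃ j, k = j + 1 := ⟨k - 1, by omega⟩
  rw [eq_convSig_add_convSig_sub_one hsum hd hk, ← h, add_mul, one_mul, map_add, coeff_succ_X_mul,
    convSig_eq_coeff_prod, convSig_eq_coeff_prod, Nat.add_sub_cancel]

end Recursion

open Polynomial in
theorem Polynomial.tendsto_eval_add_div_eval_add {𝕜 : Type*} [NormedField 𝕜] [LinearOrder 𝕜]
    [IsStrictOrderedRing 𝕜] [OrderTopology 𝕜] {P : 𝕜[X]} (hP : P ≠ 0) (b c : 𝕜) :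
    Tendsto (fun x => P.eval (x + b) / P.eval (x + c)) atTop (nhds 1) := by
  have h := div_tendsto_atTop_leadingCoeff_div_of_degree_eq (taylor b P) (taylor c P)
    (by rw [degree_taylor, degree_taylor])
  simpa [leadingCoeff_taylor, taylor_eval, div_self (leadingCoeff_ne_zero.mpr hP)] using h

theorem tendsto_choose_sub_div_choose (s a : ℕ) :
    Tendsto (fun k : ℕ => ((s + (k - a)).choose s : ℝ) / (s + k).choose s) atTop (nhds 1) := by
  have h := (Polynomial.tendsto_eval_add_div_eval_add (monic_descPochhammer ℝ s).ne_zero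
    ((s : ℝ) - a) s).comp tendsto_natCast_atTop_atTop
  refine h.congr' ?_
  filter_upwards [eventually_ge_atTop a] with k hk
  rw [Function.comp_apply, Nat.cast_choose_eq_descPochhammer_div,
    Nat.cast_choose_eq_descPochhammer_div, div_div_div_cancel_right₀ (by positivity)]
  push_cast [Nat.cast_sub hk]
  ring_nf

theorem tendsto_coeff_mul_invOneAddPow (H : Polynomial ℤ) (s : ℕ) :
    Tendsto (fun k : ℕ => (-1 : ℝ) ^ k * (coeff k ((H : ℤ⟦X⟧) * invOneAddPow ℤ (s + 1)) : ℤ) /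
      (s + k).choose s) atTop (nhds (H.eval (-1) : ℤ)) := by
  have hcoeff : ∀ k, H.natDegree ≤ k → coeff k ((H : ℤ⟦X⟧) * invOneAddPow ℤ (s + 1)) =
      ∑ i ∈ range (H.natDegree + 1), H.coeff i * ((-1) ^ (k - i) * (s + (k - i)).choose s) := by
    intro k hk
    rw [coeff_mul, Nat.sum_antidiagonal_eq_sum_range_succ_mk]
    simp only [Polynomial.coeff_coe, coeff_invOneAddPow_succ]
    refine (sum_subset (range_subset_range.mpr (by omega)) fun i _ hi => ?_).symm
    rw [Polynomial.coeff_eq_zero_of_natDegree_lt (by simp at hi; omega), zero_mul]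
  have hlim := tendsto_finsetSum (range (H.natDegree + 1)) fun i _ =>
    (tendsto_const_nhds (x := (H.coeff i * (-1) ^ i : ℝ))).mul (tendsto_choose_sub_div_choose s i)
  simp only [mul_one] at hlim
  rw [Polynomial.eval_eq_sum_range]
  push_cast
  refine hlim.congr' ?_
  filter_upwards [eventually_ge_atTop H.natDegree] with k hk
  rw [hcoeff k hk]
  push_cast
  rw [mul_sum, sum_div]
  refine sum_congr rfl fun i hi => ?_
  have hsign : (-1 : ℝ) ^ k = (-1) ^ i * (-1) ^ (k - i) := by
    rw [← pow_add, Nat.add_sub_cancel' (by simp at hi; omega)]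
  have hsq : ((-1 : ℝ) ^ (k - i)) ^ 2 = 1 := by
    rw [← pow_mul, mul_comm, pow_mul, neg_one_sq, one_pow]
  rw [hsign]
  linear_combination -(H.coeff i * (-1) ^ i * ((s + (k - i)).choose s / (s + k).choose s) : ℝ) * hsq

/-- for a generic tuple, the ratio of the absolute signature of the
level-`m` multiplicity space to its dimension `C(m+n−2, n−2)` tends to `1`. -/
theorem stmt_19 (n : ℕ) (hn : 2 ≤ n) (lam : Fin n → ℝ)
    (hgen : ∀ (i : Fin n) (z : ℕ), lam i ≠ z)
    (hsumZ : ∀ z : ℕ, (∑ i, lam i) ≠ z)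
    (d : ℕ → ℤ)
    (hd : ∀ k : ℕ, d k = convSig n lam k -
      ∑ m ∈ Finset.range k, d m * fsig ((∑ i, lam i) - 2 * m) ((k : ℤ) - m)) :
    Tendsto (fun m : ℕ => (|d m| : ℝ) / ((m + n - 2).choose (n - 2) : ℝ))
      atTop (nhds 1) := by
  obtain ⟨s, rfl⟩ := Nat.exists_eq_add_of_le' hn
  set H := ∏ i, sigNumerator (lam i)
  have hH : |((H.eval (-1) : ℤ) : ℝ)| = 1 := by
    simp [H, Polynomial.eval_prod, eval_neg_one_sigNumerator, abs_prod]
  have hlim := (tendsto_coeff_mul_invOneAddPow H s).abs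
  rw [hH] at hlim
  refine hlim.congr' ?_
  filter_upwards [eventually_gt_atTop ⌈∑ i, lam i⌉₊] with k hk
  have hdk : d k = coeff k ((H : ℤ⟦X⟧) * invOneAddPow ℤ (s + 1)) :=
    eq_coeff_mul_invOneAddPow hgen hsumZ hd hk
  rw [hdk, show k + (s + 2) - 2 = s + k by omega]
  simp [abs_div]
end
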